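/- Let X be a normed vector space, T > 0, n ∈ ℕ, τ = T/n, t_i = iτ, and u_0, u_1, …, u_n ∈ X with δu_i = (u_i − u_{i-1})/τ. Define the piecewise-linear Rothe function U_n : [0,T] → X by U_n(0) = u_0 and U_n(t) = u_{i-1} + (t − t_{i-1})δu_i for t ∈ (t_{i-1}, t_i], and the piecewise-constant Rothe function Ū_n : [−τ, T] → X by Ū_n(t) = u_0 for t ∈ [−τ, 0] and Ū_n(t) = u_i for t ∈ (t_{i-1}, t_i]. Then ∫₀^T ( ‖Ū_n(t) − U_n(t)‖² + ‖Ū_n(t − τ) − U_n(t)‖² ) dt ≤ 2 τ² ∑_{i=1}^{n} ‖δu_i‖² τ. -/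

import Mathlib

/-!
On the cell `(kτ, (k+1)τ]` both Rothe functions are built from `u k` and `u (k+1)` only:
`Ū_n(t) − U_n(t) = ((k+1)τ − t) δu` and `Ū_n(t − τ) − U_n(t) = −(t − kτ) δu` with `δu = δu_{k+1}`.
The integrand is therefore `((τ − s)² + s²) ‖δu‖²` with `s = t − kτ`, whose integral over the cell
is `(2/3) τ³ ‖δu‖² ≤ 2τ² · ‖δu‖² τ`; summing over the cells gives the claim.
-/

open MeasureTheory Set

theorem norm_sub_interp_sq_add {X : Type*} [NormedAddCommGroup X] [NormedSpace ℝ X]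
    (x y : X) {τ : ℝ} (hτ : τ ≠ 0) (s : ℝ) :
    ‖y - (x + s • τ⁻¹ • (y - x))‖ ^ 2 + ‖x - (x + s • τ⁻¹ • (y - x))‖ ^ 2
      = ((τ - s) ^ 2 + s ^ 2) * ‖τ⁻¹ • (y - x)‖ ^ 2 := by
  set v := τ⁻¹ • (y - x)
  have hy : y = x + τ • v := by simp [v, smul_smul, mul_inv_cancel₀ hτ]
  clear_value v
  have h_right : y - (x + s • v) = (τ - s) • v := by rw [hy, sub_smul]; abel
  have h_left : x - (x + s • v) = -(s • v) := by abel
  rw [h_right, h_left, norm_neg, norm_smul, norm_smul, mul_pow, mul_pow, Real.norm_eq_abs,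
    Real.norm_eq_abs, sq_abs, sq_abs]
  ring

theorem integral_sq_sub_add_sq_sub (a τ : ℝ) :
    ∫ t in a..a + τ, ((τ - (t - a)) ^ 2 + (t - a) ^ 2) = 2 * τ ^ 3 / 3 := by
  rw [intervalIntegral.integral_comp_sub_right (fun s => (τ - s) ^ 2 + s ^ 2)]
  simp only [sub_self, add_sub_cancel_left]
  rw [intervalIntegral.integral_add, intervalIntegral.integral_comp_sub_left (fun s => s ^ 2)]
  · simp [integral_pow]
    ring
  all_goals exact (by fun_prop : Continuous _).intervalIntegrable _ _

theorem setIntegral_Ioc_eq_sum_of_eqOn {f : ℝ → ℝ} {g : ℕ → ℝ → ℝ} {τ : ℝ} (hτ : 0 ≤ τ)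
    (n : ℕ) (hg : ∀ k < n, IntervalIntegrable (g k) volume (k * τ) (k * τ + τ))
    (hfg : ∀ k < n, EqOn f (g k) (Ioc (k * τ) (k * τ + τ))) :
    ∫ t in Ioc 0 (n * τ), f t
      = ∑ k ∈ Finset.range n, ∫ t in (k * τ)..(k * τ + τ), g k t := by
  have hnext : ∀ k : ℕ, ((k + 1 : ℕ) : ℝ) * τ = k * τ + τ := fun k => by push_cast; ring
  have hcell_le : ∀ k : ℕ, (k : ℝ) * τ ≤ k * τ + τ := fun k => by linarith
  have hf_int : ∀ k < n, IntervalIntegrable f volume (k * τ) (((k + 1 : ℕ) : ℝ) * τ) :=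
    fun k hk => by
      rw [hnext, intervalIntegrable_congr (by rw [uIoc_of_le (hcell_le k)]; exact hfg k hk)]
      exact hg k hk
  have hsplit := intervalIntegral.sum_integral_adjacent_intervals hf_int
  rw [Nat.cast_zero, zero_mul] at hsplit
  rw [← intervalIntegral.integral_of_le (by positivity), ← hsplit]
  refine Finset.sum_congr rfl fun k hk => ?_
  rw [hnext]
  refine intervalIntegral.integral_congr_uIoo ((hfg k (Finset.mem_range.mp hk)).mono ?_)
  rw [uIoo_of_le (hcell_le k)]
  exact Ioo_subset_Ioc_self

theorem rothe_gap_sq_eq_of_mem_cell {X : Type*} [NormedAddCommGroup X] [NormedSpace ℝ X]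
    {τ : ℝ} (hτ : 0 < τ) {n : ℕ} {u : ℕ → X} {U Ubar : ℝ → X}
    (hU : ∀ i : ℕ, 1 ≤ i → i ≤ n → ∀ t ∈ Ioc (((i : ℝ) - 1) * τ) ((i : ℝ) * τ),
      U t = u (i - 1) + (t - ((i : ℝ) - 1) * τ) • (τ⁻¹ • (u i - u (i - 1))))
    (hUbar0 : ∀ t ∈ Icc (-τ) (0 : ℝ), Ubar t = u 0)
    (hUbar : ∀ i : ℕ, 1 ≤ i → i ≤ n → ∀ t ∈ Ioc (((i : ℝ) - 1) * τ) ((i : ℝ) * τ),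
      Ubar t = u i)
    {k : ℕ} (hk : k < n) {t : ℝ} (ht : t ∈ Ioc (k * τ) (k * τ + τ)) :
    ‖Ubar t - U t‖ ^ 2 + ‖Ubar (t - τ) - U t‖ ^ 2
      = ((τ - (t - k * τ)) ^ 2 + (t - k * τ) ^ 2) * ‖τ⁻¹ • (u (k + 1) - u k)‖ ^ 2 := by
  have hcell : t ∈ Ioc ((((k + 1 : ℕ) : ℝ) - 1) * τ) (((k + 1 : ℕ) : ℝ) * τ) := by
    push_cast
    constructor <;> linarith [ht.1, ht.2]
  have hUt := hU (k + 1) k.succ_pos hk t hcell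
  have hUbart := hUbar (k + 1) k.succ_pos hk t hcell
  have hUbar_prev : Ubar (t - τ) = u k := by
    rcases k.eq_zero_or_pos with rfl | hk0
    · rw [Nat.cast_zero, zero_mul, zero_add] at ht
      exact hUbar0 _ ⟨by linarith [ht.1], by linarith [ht.2]⟩
    · exact hUbar k hk0 hk.le _ ⟨by linarith [ht.1], by linarith [ht.2]⟩
  push_cast at hUt
  simp only [add_sub_cancel_right] at hUt hUbart
  rw [hUt, hUbart, hUbar_prev, norm_sub_interp_sq_add _ _ hτ.ne']

theorem statement_7_general {X : Type*} [NormedAddCommGroup X] [NormedSpace ℝ X]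
    (T : ℝ) (hT : 0 < T) (n : ℕ) (hn : 1 ≤ n)
    (τ : ℝ) (hτ : τ = T / n)
    (u : ℕ → X) (U Ubar : ℝ → X)
    (hU : ∀ i : ℕ, 1 ≤ i → i ≤ n → ∀ t ∈ Ioc (((i : ℝ) - 1) * τ) ((i : ℝ) * τ),
      U t = u (i - 1) + (t - ((i : ℝ) - 1) * τ) • (τ⁻¹ • (u i - u (i - 1))))
    (hUbar0 : ∀ t ∈ Icc (-τ) (0 : ℝ), Ubar t = u 0)
    (hUbar : ∀ i : ℕ, 1 ≤ i → i ≤ n → ∀ t ∈ Ioc (((i : ℝ) - 1) * τ) ((i : ℝ) * τ),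
      Ubar t = u i) :
    ∫ t in Ioc (0 : ℝ) T, (‖Ubar t - U t‖ ^ 2 + ‖Ubar (t - τ) - U t‖ ^ 2)
      ≤ 2 * τ ^ 2 * ∑ i ∈ Finset.Icc 1 n, ‖τ⁻¹ • (u i - u (i - 1))‖ ^ 2 * τ := by
  have hτ0 : 0 < τ := by
    have : (0 : ℝ) < n := by exact_mod_cast hn
    rw [hτ]; positivity
  have hT_eq : T = n * τ := by rw [hτ]; field_simp
  set δ : ℕ → ℝ := fun k => ‖τ⁻¹ • (u (k + 1) - u k)‖ ^ 2
  rw [hT_eq, setIntegral_Ioc_eq_sum_of_eqOn hτ0.le n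
    (g := fun k t => ((τ - (t - k * τ)) ^ 2 + (t - k * τ) ^ 2) * δ k)
    (fun k _ => (by fun_prop : Continuous _).intervalIntegrable _ _)
    (fun k hk t ht => rothe_gap_sq_eq_of_mem_cell hτ0 hU hUbar0 hUbar hk ht)]
  calc ∑ k ∈ Finset.range n,
        ∫ t in (k * τ)..(k * τ + τ), ((τ - (t - k * τ)) ^ 2 + (t - k * τ) ^ 2) * δ k
      = ∑ k ∈ Finset.range n, 2 * τ ^ 3 / 3 * δ k := by
        simp only [intervalIntegral.integral_mul_const, integral_sq_sub_add_sq_sub]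
    _ ≤ ∑ k ∈ Finset.range n, 2 * τ ^ 2 * (δ k * τ) :=
        Finset.sum_le_sum fun k _ => by
          nlinarith [pow_pos hτ0 3, sq_nonneg ‖τ⁻¹ • (u (k + 1) - u k)‖]
    _ = 2 * τ ^ 2 * ∑ i ∈ Finset.Icc 1 n, ‖τ⁻¹ • (u i - u (i - 1))‖ ^ 2 * τ := by
        rw [← Finset.mul_sum, ← Finset.Ico_add_one_right_eq_Icc, Finset.sum_Ico_eq_sum_range]
        simp [δ, add_comm 1]

/-- For the piecewise-linear Rothe function `U_n` and the piecewise-constant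
Rothe function `Ū_n` built from `u_0, …, u_n` in a normed vector space `X` with step `τ = T/n`,
one has `∫₀^T (‖Ū_n(t) − U_n(t)‖² + ‖Ū_n(t−τ) − U_n(t)‖²) dt ≤ 2τ² ∑_{i=1}^{n} ‖δu_i‖² τ`,
where `δu_i = (u_i − u_{i-1})/τ`. -/
theorem statement_7 {X : Type*} [NormedAddCommGroup X] [NormedSpace ℝ X]
    (T : ℝ) (hT : 0 < T) (n : ℕ) (hn : 1 ≤ n)
    (τ : ℝ) (hτ : τ = T / n)
    (u : ℕ → X) (U Ubar : ℝ → X)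
    (hU0 : U 0 = u 0)
    (hU : ∀ i : ℕ, 1 ≤ i → i ≤ n → ∀ t ∈ Ioc (((i : ℝ) - 1) * τ) ((i : ℝ) * τ),
      U t = u (i - 1) + (t - ((i : ℝ) - 1) * τ) • (τ⁻¹ • (u i - u (i - 1))))
    (hUbar0 : ∀ t ∈ Icc (-τ) (0 : ℝ), Ubar t = u 0)
    (hUbar : ∀ i : ℕ, 1 ≤ i → i ≤ n → ∀ t ∈ Ioc (((i : ℝ) - 1) * τ) ((i : ℝ) * τ),
      Ubar t = u i) :
    ∫ t in Ioc (0 : ℝ) T, (‖Ubar t - U t‖ ^ 2 + ‖Ubar (t - τ) - U t‖ ^ 2)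
      ≤ 2 * τ ^ 2 * ∑ i ∈ Finset.Icc 1 n, ‖τ⁻¹ • (u i - u (i - 1))‖ ^ 2 * τ :=
  statement_7_general T hT n hn τ hτ u U Ubar hU hUbar0 hUbar
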